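/- For any symmetric bounded measurable function W : [0,1]² → ℝ, one has t(K₃, W) ≤ (∫∫ W(x,y)² dx dy)^{3/2}, where t(K₃, W) = ∫∫∫ W(x,y)W(x,z)W(y,z) dx dy dz. -/

import Mathlib

open MeasureTheory Real

noncomputable section

def I01 : Set ℝ := Set.Icc 0 1

/-- Triangle density of a kernel `W`. -/
def tK3 (W : ℝ → ℝ → ℝ) : ℝ :=
  ∫ x in I01, ∫ y in I01, ∫ z in I01, W x y * W x z * W y z

/-!
Write `g(x, y) = ∫ W(x, z) W(y, z) dz` for the codegree and `S = ∫∫ W²`, so that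
`t(K₃, W) = ∫∫ W(x, y) g(x, y)` and `g(x, x) = ∫ W(x, ·)²`. Cauchy–Schwarz in `z` gives
`g(x, y)² ≤ g(x, x) g(y, y)`, hence `∫ g(x, ·)² ≤ g(x, x) S`, and Cauchy–Schwarz in `y` then gives
`∫ W(x, ·) g(x, ·) ≤ g(x, x) √S`. Integrating in `x` yields `t(K₃, W) ≤ S √S`.
-/

theorem abs_mul_le_of_abs_le {a b c d : ℝ} (ha : |a| ≤ c) (hb : |b| ≤ d) : |a * b| ≤ c * d :=
  abs_mul a b ▸ mul_le_mul ha hb (abs_nonneg b) ((abs_nonneg a).trans ha)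

namespace MeasureTheory

variable {α : Type*} [MeasurableSpace α] {μ : Measure α}

theorem sq_integral_mul_le_integral_sq_mul_integral_sq {f g : α → ℝ} (hf : MemLp f 2 μ)
    (hg : MemLp g 2 μ) :
    (∫ x, f x * g x ∂μ) ^ 2 ≤ (∫ x, f x ^ 2 ∂μ) * ∫ x, g x ^ 2 ∂μ := by
  have inner_toLp {u v : α → ℝ} (hu : MemLp u 2 μ) (hv : MemLp v 2 μ) :
      inner ℝ (hu.toLp u) (hv.toLp v) = ∫ x, u x * v x ∂μ := by
    rw [L2.inner_def]
    refine integral_congr_ae ?_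
    filter_upwards [hu.coeFn_toLp, hv.coeFn_toLp] with x hux hvx
    simp [hux, hvx, mul_comm]
  simpa only [inner_toLp, ← sq] using real_inner_mul_inner_self_le (hf.toLp f) (hg.toLp g)

section FiniteMeasure

variable [IsFiniteMeasure μ]

theorem abs_integral_le_mul_measureReal_univ {f : α → ℝ} {C : ℝ} (hC : ∀ x, |f x| ≤ C) :
    |∫ x, f x ∂μ| ≤ C * μ.real Set.univ :=
  norm_integral_le_of_norm_le_const (μ := μ) (f := f) (ae_of_all _ hC)

theorem Integrable.of_abs_le {f : α → ℝ} (hf : AEStronglyMeasurable f μ) {C : ℝ}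
    (hC : ∀ x, |f x| ≤ C) : Integrable f μ :=
  .of_bound hf C (ae_of_all _ hC)

theorem MemLp.of_abs_le {f : α → ℝ} (hf : AEStronglyMeasurable f μ) {C : ℝ}
    (hC : ∀ x, |f x| ≤ C) {p : ENNReal} : MemLp f p μ :=
  .of_bound hf C (ae_of_all _ hC)

end FiniteMeasure

variable {W : α → α → ℝ} {C : ℝ}

def codegree (μ : Measure α) (W : α → α → ℝ) (x y : α) : ℝ := ∫ z, W x z * W y z ∂μ

def triangleDensity (μ : Measure α) (W : α → α → ℝ) : ℝ :=
  ∫ x, ∫ y, ∫ z, W x y * W x z * W y z ∂μ ∂μ ∂μ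

theorem triangleDensity_eq_integral_mul_codegree :
    triangleDensity μ W = ∫ x, ∫ y, W x y * codegree μ W x y ∂μ ∂μ := by
  simp only [triangleDensity, codegree, mul_assoc, integral_const_mul]

theorem codegree_self (x : α) : codegree μ W x x = ∫ y, W x y ^ 2 ∂μ := by
  simp only [codegree, sq]

theorem codegree_self_nonneg (x : α) : 0 ≤ codegree μ W x x := by
  rw [codegree_self]
  exact integral_nonneg fun y => sq_nonneg _

theorem stronglyMeasurable_codegree [SFinite μ] (hW : Measurable (Function.uncurry W)) :
    StronglyMeasurable (Function.uncurry (codegree μ W)) := by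
  have h : Measurable fun q : (α × α) × α => W q.1.1 q.2 * W q.1.2 q.2 :=
    (hW.comp (measurable_fst.fst.prodMk measurable_snd)).mul
      (hW.comp (measurable_fst.snd.prodMk measurable_snd))
  exact h.stronglyMeasurable.integral_prod_right'

variable [IsFiniteMeasure μ]

theorem abs_codegree_le (hC : ∀ x y, |W x y| ≤ C) (x y : α) :
    |codegree μ W x y| ≤ C * C * μ.real Set.univ :=
  abs_integral_le_mul_measureReal_univ fun z => abs_mul_le_of_abs_le (hC x z) (hC y z)

theorem memLp_two_row (hW : Measurable (Function.uncurry W)) (hC : ∀ x y, |W x y| ≤ C)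
    (x : α) : MemLp (W x) 2 μ :=
  .of_abs_le (hW.comp measurable_prodMk_left).aestronglyMeasurable (hC x)

theorem codegree_sq_le (hW : Measurable (Function.uncurry W)) (hC : ∀ x y, |W x y| ≤ C)
    (x y : α) : codegree μ W x y ^ 2 ≤ codegree μ W x x * codegree μ W y y := by
  simpa only [codegree, sq] using
    sq_integral_mul_le_integral_sq_mul_integral_sq (memLp_two_row hW hC x) (memLp_two_row hW hC y)

theorem integrable_codegree_self (hW : Measurable (Function.uncurry W))
    (hC : ∀ x y, |W x y| ≤ C) : Integrable (fun x => codegree μ W x x) μ :=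
  .of_abs_le ((stronglyMeasurable_codegree hW).measurable.comp
    (measurable_id.prodMk measurable_id)).aestronglyMeasurable fun x => abs_codegree_le hC x x

theorem integral_codegree_sq_le (hW : Measurable (Function.uncurry W))
    (hC : ∀ x y, |W x y| ≤ C) (x : α) :
    ∫ y, codegree μ W x y ^ 2 ∂μ ≤ codegree μ W x x * ∫ y, codegree μ W y y ∂μ := by
  rw [← integral_const_mul]
  exact integral_mono_of_nonneg (ae_of_all _ fun y => sq_nonneg _)
    ((integrable_codegree_self hW hC).const_mul _) (ae_of_all _ (codegree_sq_le hW hC x))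

theorem integral_mul_codegree_le (hW : Measurable (Function.uncurry W))
    (hC : ∀ x y, |W x y| ≤ C) (x : α) :
    ∫ y, W x y * codegree μ W x y ∂μ ≤
      codegree μ W x x * √(∫ y, codegree μ W y y ∂μ) := by
  set S := ∫ y, codegree μ W y y ∂μ
  have hS : 0 ≤ S := integral_nonneg codegree_self_nonneg
  have hcodegree : MemLp (codegree μ W x) 2 μ :=
    .of_abs_le ((stronglyMeasurable_codegree hW).measurable.comp
      measurable_prodMk_left).aestronglyMeasurable (abs_codegree_le hC x)
  refine le_of_sq_le_sq ?_ (mul_nonneg (codegree_self_nonneg x) (sqrt_nonneg S))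
  calc (∫ y, W x y * codegree μ W x y ∂μ) ^ 2
      ≤ codegree μ W x x * ∫ y, codegree μ W x y ^ 2 ∂μ := by
        rw [codegree_self]
        exact sq_integral_mul_le_integral_sq_mul_integral_sq (memLp_two_row hW hC x) hcodegree
    _ ≤ codegree μ W x x * (codegree μ W x x * S) :=
        mul_le_mul_of_nonneg_left (integral_codegree_sq_le hW hC x) (codegree_self_nonneg x)
    _ = (codegree μ W x x * √S) ^ 2 := by
        rw [mul_pow, sq_sqrt hS]
        ring

theorem triangleDensity_le (hW : Measurable (Function.uncurry W)) (hC : ∀ x y, |W x y| ≤ C) :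
    triangleDensity μ W ≤ (∫ x, ∫ y, W x y ^ 2 ∂μ ∂μ) ^ ((3 : ℝ) / 2) := by
  set S := ∫ x, codegree μ W x x ∂μ
  have hS : 0 ≤ S := integral_nonneg codegree_self_nonneg
  have hinner : Integrable (fun x => ∫ y, W x y * codegree μ W x y ∂μ) μ :=
    .of_abs_le (hW.stronglyMeasurable.mul
      (stronglyMeasurable_codegree hW)).integral_prod_right'.aestronglyMeasurable fun x =>
        abs_integral_le_mul_measureReal_univ fun y =>
          abs_mul_le_of_abs_le (hC x y) (abs_codegree_le hC x y)
  calc triangleDensity μ W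
      = ∫ x, ∫ y, W x y * codegree μ W x y ∂μ ∂μ := triangleDensity_eq_integral_mul_codegree
    _ ≤ ∫ x, codegree μ W x x * √S ∂μ :=
        integral_mono hinner ((integrable_codegree_self hW hC).mul_const _)
          (integral_mul_codegree_le hW hC)
    _ = S ^ ((3 : ℝ) / 2) := by
        rw [integral_mul_const, sqrt_eq_rpow, ← rpow_one_add' hS (by norm_num)]
        norm_num
    _ = (∫ x, ∫ y, W x y ^ 2 ∂μ ∂μ) ^ ((3 : ℝ) / 2) := by simp only [S, codegree_self]

end MeasureTheory

theorem stmt_3 (W : ℝ → ℝ → ℝ)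
    (hmeas : Measurable (Function.uncurry W))
    (hbdd : ∃ C : ℝ, ∀ x y, |W x y| ≤ C) :
    tK3 W ≤ (∫ x in I01, ∫ y in I01, (W x y) ^ 2) ^ ((3 : ℝ) / 2) := by
  obtain ⟨C, hC⟩ := hbdd
  have : IsFiniteMeasure (volume.restrict I01) := by
    rw [I01]
    infer_instance
  exact triangleDensity_le hmeas hC
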